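/- arXiv:1809.04200 — 3 statements merged into one kernel-verified Lean document; each statement's English description precedes it below -/
import Mathlib

section
/- Let V be a real inner product space of finite dimension n ≥ 2, let φ be a symmetric bilinear form on V, and let λ₁, …, λₙ be the eigenvalues of φ repeated according to multiplicity. Set m = min{λᵢλⱼ : i ≠ j}. Then m is the minimum of the sectional curvatures of R_φ: κ_{R_φ}(x,y) ≥ m for all linearly independent x, y, and there exist orthonormal vectors x, y ∈ V with κ_{R_φ}(x,y) = m. -/
/-- The canonical algebraic curvature tensor associated to a bilinear form `φ`:
`R_φ(x,y,z,w) = φ(x,w)φ(y,z) − φ(x,z)φ(y,w)`. -/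
def canonCT {V : Type*} (φ : V → V → ℝ) (x y z w : V) : ℝ :=
  φ x w * φ y z - φ x z * φ y w

/-- The sectional curvature of the 2-plane spanned by `x` and `y` with respect to a
curvature tensor `R`: `κ_R(x,y) = R(x,y,y,x)/(⟨x,x⟩⟨y,y⟩ − ⟨x,y⟩²)`. -/
noncomputable def sectCurv {V : Type*} [NormedAddCommGroup V] [InnerProductSpace ℝ V]
    (R : V → V → V → V → ℝ) (x y : V) : ℝ :=
  R x y y x / ((inner ℝ x x : ℝ) * (inner ℝ y y : ℝ) - (inner ℝ x y : ℝ) ^ 2)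

/-!
In coordinates `a, c` of `x, y` with respect to an orthonormal eigenbasis of `φ`, Lagrange's
identity gives
`φ(x,x)φ(y,y) - φ(x,y)² = ½ ∑ᵢ ∑ⱼ λᵢλⱼ (aᵢcⱼ - aⱼcᵢ)²`, and the Gram determinant
`⟨x,x⟩⟨y,y⟩ - ⟨x,y⟩²` is the same sum without the weights `λᵢλⱼ`. The diagonal terms vanish,
so comparing term by term with `m ≤ λᵢλⱼ` (`i ≠ j`) bounds the curvature below by `m`, with
equality on the pair of eigenvectors `fᵢ, fⱼ` realising the minimum.
-/

open Finset RealInnerProductSpace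

section LagrangeIdentity

variable {ι : Type*} [Fintype ι]

theorem sum_mul_sum_sub_sq_eq_half_sum_sum (μ a c : ι → ℝ) :
    (∑ i, μ i * (a i * a i)) * (∑ i, μ i * (c i * c i)) - (∑ i, μ i * (a i * c i)) ^ 2
      = (∑ i, ∑ j, μ i * μ j * (a i * c j - a j * c i) ^ 2) / 2 := by
  have expand : ∀ i j, μ i * μ j * (a i * c j - a j * c i) ^ 2
      = μ i * (a i * a i) * (μ j * (c j * c j)) + μ i * (c i * c i) * (μ j * (a j * a j))
        - 2 * (μ i * (a i * c i) * (μ j * (a j * c j))) := fun i j => by ring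
  simp only [expand, sum_add_distrib, sum_sub_distrib, ← mul_sum, ← sum_mul]
  ring

theorem mul_sum_mul_sum_sub_sq_le {μ : ι → ℝ} {m : ℝ} (hm : ∀ i j, i ≠ j → m ≤ μ i * μ j)
    (a c : ι → ℝ) :
    m * ((∑ i, a i * a i) * (∑ i, c i * c i) - (∑ i, a i * c i) ^ 2)
      ≤ (∑ i, μ i * (a i * a i)) * (∑ i, μ i * (c i * c i)) - (∑ i, μ i * (a i * c i)) ^ 2 := by
  have unweighted := sum_mul_sum_sub_sq_eq_half_sum_sum 1 a c
  simp only [Pi.one_apply, one_mul] at unweighted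
  rw [unweighted, sum_mul_sum_sub_sq_eq_half_sum_sum, mul_div_assoc', mul_sum]
  gcongr with i _
  rw [mul_sum]
  refine sum_le_sum fun j _ => ?_
  obtain rfl | hij := eq_or_ne i j
  · simp
  · exact mul_le_mul_of_nonneg_right (hm i j hij) (sq_nonneg _)

end LagrangeIdentity

theorem Orthonormal.pair {𝕜 E ι : Type*} [RCLike 𝕜] [NormedAddCommGroup E]
    [InnerProductSpace 𝕜 E] {v : ι → E} (hv : Orthonormal 𝕜 v) {i j : ι} (hij : i ≠ j) :
    Orthonormal 𝕜 ![v i, v j] := by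
  have : ![v i, v j] = v ∘ ![i, j] := by ext k; fin_cases k <;> rfl
  rw [this]
  exact hv.comp _ (by simp [Function.Injective, Fin.forall_fin_two, hij, hij.symm])

section InnerProductSpace

variable {E : Type*} [NormedAddCommGroup E] [InnerProductSpace ℝ E]

theorem real_inner_self_mul_inner_self_sub_sq_pos {x y : E} (h : LinearIndependent ℝ ![x, y]) :
    0 < ⟪x, x⟫ * ⟪y, y⟫ - ⟪x, y⟫ ^ 2 := by
  have hdet := (Matrix.posDef_gram_of_linearIndependent h).det_pos
  simpa [Matrix.det_fin_two, Matrix.gram_apply, real_inner_comm x y, sq] using hdet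

theorem sectCurv_of_orthonormal (R : E → E → E → E → ℝ) {x y : E}
    (h : Orthonormal ℝ ![x, y]) : sectCurv R x y = R x y y x := by
  rw [orthonormal_iff_ite] at h
  have hxx : ⟪x, x⟫ = 1 := by simpa using h 0 0
  have hyy : ⟪y, y⟫ = 1 := by simpa using h 1 1
  have hxy : ⟪x, y⟫ = 0 := by simpa using h 0 1
  simp only [sectCurv, hxx, hyy, hxy]
  norm_num

variable {ι : Type*} [Fintype ι]

theorem OrthonormalBasis.real_inner_eq_sum (b : OrthonormalBasis ι ℝ E) (x y : E) :
    ⟪x, y⟫ = ∑ i, ⟪b i, x⟫ * ⟪b i, y⟫ := by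
  simp_rw [← b.sum_inner_mul_inner x y, real_inner_comm x]

theorem OrthonormalBasis.inner_apply_eq_sum_of_apply_eq_smul (b : OrthonormalBasis ι ℝ E)
    {A : E →ₗ[ℝ] E} {lam : ι → ℝ} (hb : ∀ i, A (b i) = lam i • b i) (x y : E) :
    ⟪A x, y⟫ = ∑ i, lam i * (⟪b i, x⟫ * ⟪b i, y⟫) := by
  conv_lhs => rw [← b.sum_repr' x]
  simp only [map_sum, map_smul, hb, sum_inner, real_inner_smul_left]
  exact sum_congr rfl fun i _ => mul_left_comm _ _ _

theorem mul_gram_le_canonCT_of_eq_sum (b : OrthonormalBasis ι ℝ E) {φ : E → E → ℝ}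
    {lam : ι → ℝ} (hφ : ∀ x y, φ x y = ∑ i, lam i * (⟪b i, x⟫ * ⟪b i, y⟫)) {m : ℝ}
    (hm : ∀ i j, i ≠ j → m ≤ lam i * lam j) (x y : E) :
    m * (⟪x, x⟫ * ⟪y, y⟫ - ⟪x, y⟫ ^ 2) ≤ canonCT φ x y y x := by
  have key := mul_sum_mul_sum_sub_sq_le hm (⟪b ·, x⟫) (⟪b ·, y⟫)
  rw [canonCT, hφ x x, hφ y y, hφ x y, hφ y x, b.real_inner_eq_sum x x,
    b.real_inner_eq_sum y y, b.real_inner_eq_sum x y]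
  convert key using 2
  simp only [mul_comm ⟪b _, y⟫, sq]

end InnerProductSpace

theorem min_sectional_curvature_of_canonCT_general
    {V : Type*} [NormedAddCommGroup V] [InnerProductSpace ℝ V]
    {n : ℕ}
    (φ : V →ₗ[ℝ] V →ₗ[ℝ] ℝ)
    (A : V →ₗ[ℝ] V) (hA : ∀ x y : V, φ x y = (inner ℝ (A x) y : ℝ))
    (b : OrthonormalBasis (Fin n) ℝ V) (lam : Fin n → ℝ)
    (hb : ∀ i, A (b i) = lam i • b i)
    (m : ℝ)
    (hm : IsLeast {c : ℝ | ∃ i j : Fin n, i ≠ j ∧ c = lam i * lam j} m) :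
    (∀ x y : V, LinearIndependent ℝ ![x, y] →
      m ≤ sectCurv (canonCT (fun u v => φ u v)) x y) ∧
    (∃ x y : V, Orthonormal ℝ ![x, y] ∧
      sectCurv (canonCT (fun u v => φ u v)) x y = m) := by
  have hφ (x y : V) : φ x y = ∑ i, lam i * (⟪b i, x⟫ * ⟪b i, y⟫) :=
    (hA x y).trans (b.inner_apply_eq_sum_of_apply_eq_smul hb x y)
  refine ⟨fun x y hxy => ?_, ?_⟩
  · rw [sectCurv, le_div_iff₀ (real_inner_self_mul_inner_self_sub_sq_pos hxy)]
    exact mul_gram_le_canonCT_of_eq_sum b hφ (fun i j hij => hm.2 ⟨i, j, hij, rfl⟩) x y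
  · obtain ⟨i, j, hij, rfl⟩ := hm.1
    have hφb (k l : Fin n) : φ (b k) (b l) = lam k * ⟪b k, b l⟫ := by
      rw [hA, hb, real_inner_smul_left]
    refine ⟨b i, b j, b.orthonormal.pair hij, ?_⟩
    rw [sectCurv_of_orthonormal _ (b.orthonormal.pair hij), canonCT]
    simp [hφb, b.orthonormal.2 hij, b.orthonormal.2 hij.symm]

/-- The minimum pairwise product `m` of eigenvalues of `φ` is the minimum sectional
curvature of `R_φ`, and it is attained on an orthonormal pair. -/
theorem min_sectional_curvature_of_canonCT
    {V : Type*} [NormedAddCommGroup V] [InnerProductSpace ℝ V] [FiniteDimensional ℝ V]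
    {n : ℕ} (hn : 2 ≤ n) (hdim : Module.finrank ℝ V = n)
    (φ : V →ₗ[ℝ] V →ₗ[ℝ] ℝ) (hφsymm : ∀ x y : V, φ x y = φ y x)
    (A : V →ₗ[ℝ] V) (hA : ∀ x y : V, φ x y = (inner ℝ (A x) y : ℝ))
    (b : OrthonormalBasis (Fin n) ℝ V) (lam : Fin n → ℝ)
    (hb : ∀ i, A (b i) = lam i • b i)
    (m : ℝ)
    (hm : IsLeast {c : ℝ | ∃ i j : Fin n, i ≠ j ∧ c = lam i * lam j} m) :
    (∀ x y : V, LinearIndependent ℝ ![x, y] →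
      m ≤ sectCurv (canonCT (fun u v => φ u v)) x y) ∧
    (∃ x y : V, Orthonormal ℝ ![x, y] ∧
      sectCurv (canonCT (fun u v => φ u v)) x y = m) :=
  min_sectional_curvature_of_canonCT_general φ A hA b lam hb m hm
end

section
/- Let V be a real inner product space of finite dimension n ≥ 2, let φ be a symmetric bilinear form on V, and let λ₁, …, λₙ be the eigenvalues of φ repeated according to multiplicity. Set m = min{λᵢλⱼ : i ≠ j} and M = max{λᵢλⱼ : i ≠ j}. Then for every real number c with m ≤ c ≤ M, there exist linearly independent vectors x, y ∈ V with κ_{R_φ}(x,y) = c. -/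
/-!
If `x` is a unit eigenvector of `A` with eigenvalue `μ` and `y` is a unit vector orthogonal to
`x`, then `κ(x, y) = μ φ(y, y)`. Taking `x = fᵢ` and `y = √s fⱼ + √t fₖ` with `s + t = 1`
(`j, k ≠ i`) gives `κ = λᵢ (s λⱼ + t λₖ)`, so every value between `λᵢλⱼ` and `λᵢλₖ` is a
sectional curvature. The products realizing `m` and `M` either share an index, or are linked by
a third product sharing an index with each.
-/

open Set
open scoped RealInnerProductSpace

theorem orthonormal_pair_iff {𝕜 E : Type*} [RCLike 𝕜] [NormedAddCommGroup E]
    [InnerProductSpace 𝕜 E] {x y : E} :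
    Orthonormal 𝕜 ![x, y] ↔ ‖x‖ = 1 ∧ ‖y‖ = 1 ∧ inner 𝕜 x y = 0 := by
  refine ⟨fun h => ⟨h.1 0, h.1 1, h.2 Fin.zero_ne_one⟩, fun ⟨hx, hy, hxy⟩ => ⟨?_, ?_⟩⟩
  · intro i
    fin_cases i <;> assumption
  · intro i j hij
    fin_cases i <;> fin_cases j <;> simp_all [inner_eq_zero_symm]

section

variable {V : Type*} [NormedAddCommGroup V] [InnerProductSpace ℝ V]

def sectCurvValues (R : V → V → V → V → ℝ) : Set ℝ :=
  {c | ∃ x y : V, LinearIndependent ℝ ![x, y] ∧ sectCurv R x y = c}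

theorem Orthonormal.sectCurv_mem_sectCurvValues {R : V → V → V → V → ℝ} {x y : V}
    (h : Orthonormal ℝ ![x, y]) : sectCurv R x y ∈ sectCurvValues R :=
  ⟨x, y, h.linearIndependent, rfl⟩

theorem Orthonormal.sectCurv_canonCT (φ : V → V → ℝ) {x y : V} (h : Orthonormal ℝ ![x, y]) :
    sectCurv (canonCT φ) x y = φ x x * φ y y - φ x y * φ y x := by
  obtain ⟨hx, hy, hxy⟩ := orthonormal_pair_iff.mp h
  simp [sectCurv, canonCT, hx, hy, hxy]

theorem Orthonormal.sectCurv_canonCT_of_eigen {φ : V → V → ℝ} (hφsymm : ∀ u v, φ u v = φ v u)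
    {μ : ℝ} {x y : V} (hx : ∀ v, φ x v = μ * ⟪x, v⟫) (h : Orthonormal ℝ ![x, y]) :
    sectCurv (canonCT φ) x y = μ * φ y y := by
  obtain ⟨hx1, -, hxy⟩ := orthonormal_pair_iff.mp h
  rw [h.sectCurv_canonCT, hφsymm y x, hx x, hx y, hxy, real_inner_self_eq_norm_sq, hx1]
  ring

variable {ι : Type*} [Fintype ι] [DecidableEq ι]
  (b : OrthonormalBasis ι ℝ V) {lam : ι → ℝ} {φ : V →ₗ[ℝ] V →ₗ[ℝ] ℝ}

theorem OrthonormalBasis.orthonormal_pair {i j : ι} (hij : i ≠ j) :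
    Orthonormal ℝ ![b i, b j] :=
  orthonormal_pair_iff.mpr ⟨b.norm_eq_one i, b.norm_eq_one j, by simp [b.inner_eq_ite, hij]⟩

theorem OrthonormalBasis.orthonormal_pair_smul_add_smul {i j k : ι} (hji : j ≠ i) (hki : k ≠ i)
    (hjk : j ≠ k) {α β : ℝ} (hαβ : α ^ 2 + β ^ 2 = 1) :
    Orthonormal ℝ ![b i, α • b j + β • b k] := by
  refine orthonormal_pair_iff.mpr ⟨b.norm_eq_one i, ?_, ?_⟩
  · rw [← pow_eq_one_iff_of_nonneg (norm_nonneg _) two_ne_zero, ← real_inner_self_eq_norm_sq]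
    simp only [inner_add_left, inner_add_right, real_inner_smul_left, real_inner_smul_right,
      b.inner_eq_ite, hjk, hjk.symm, if_true, if_false]
    linear_combination hαβ
  · simp [inner_add_right, real_inner_smul_right, b.inner_eq_ite, hji.symm, hki.symm]

theorem OrthonormalBasis.apply_smul_add_smul_self (hφ : ∀ p v, φ (b p) v = lam p * ⟪b p, v⟫)
    {j k : ι} (hjk : j ≠ k) (α β : ℝ) :
    φ (α • b j + β • b k) (α • b j + β • b k) = α ^ 2 * lam j + β ^ 2 * lam k := by
  simp [hφ, inner_add_right, real_inner_smul_right, b.inner_eq_ite, hjk, hjk.symm]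
  ring

theorem OrthonormalBasis.uIcc_mul_subset_sectCurvValues (hφsymm : ∀ u v, φ u v = φ v u)
    (hφ : ∀ p v, φ (b p) v = lam p * ⟪b p, v⟫) {i j k : ι} (hji : j ≠ i) (hki : k ≠ i) :
    uIcc (lam i * lam j) (lam i * lam k) ⊆ sectCurvValues (canonCT fun u v => φ u v) := by
  have hκ (y : V) (hy : Orthonormal ℝ ![b i, y]) :
      sectCurv (canonCT fun u v => φ u v) (b i) y = lam i * φ y y :=
    hy.sectCurv_canonCT_of_eigen hφsymm (hφ i)
  rw [← segment_eq_uIcc]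
  rintro _ ⟨s, t, hs, ht, hst, rfl⟩
  by_cases hjk : j = k
  · subst hjk
    have hON := b.orthonormal_pair hji.symm
    rw [Convex.combo_self hst, ← mul_one (lam j), ← b.inner_eq_ite j j |>.trans (if_pos rfl),
      ← hφ, ← hκ _ hON]
    exact hON.sectCurv_mem_sectCurvValues
  · have hON := b.orthonormal_pair_smul_add_smul hji hki hjk
      (show √s ^ 2 + √t ^ 2 = 1 by rw [Real.sq_sqrt hs, Real.sq_sqrt ht, hst])
    convert hON.sectCurv_mem_sectCurvValues using 1
    rw [hκ _ hON, b.apply_smul_add_smul_self hφ hjk, Real.sq_sqrt hs, Real.sq_sqrt ht,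
      smul_eq_mul, smul_eq_mul]
    ring

end

theorem sectional_curvature_attains_of_canonCT_general
    {V : Type*} [NormedAddCommGroup V] [InnerProductSpace ℝ V]
    {n : ℕ}
    (φ : V →ₗ[ℝ] V →ₗ[ℝ] ℝ) (hφsymm : ∀ x y : V, φ x y = φ y x)
    (A : V →ₗ[ℝ] V) (hA : ∀ x y : V, φ x y = (inner ℝ (A x) y : ℝ))
    (b : OrthonormalBasis (Fin n) ℝ V) (lam : Fin n → ℝ)
    (hb : ∀ i, A (b i) = lam i • b i)
    (m M : ℝ)
    (hm : IsLeast {c : ℝ | ∃ i j : Fin n, i ≠ j ∧ c = lam i * lam j} m)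
    (hM : IsGreatest {c : ℝ | ∃ i j : Fin n, i ≠ j ∧ c = lam i * lam j} M) :
    ∀ c : ℝ, m ≤ c → c ≤ M →
      ∃ x y : V, LinearIndependent ℝ ![x, y] ∧
        sectCurv (canonCT (fun u v => φ u v)) x y = c := by
  have hφ (p : Fin n) (v : V) : φ (b p) v = lam p * ⟪b p, v⟫ := by
    rw [hA, hb, real_inner_smul_left]
  have hsub {i j k : Fin n} (hji : j ≠ i) (hki : k ≠ i) :=
    b.uIcc_mul_subset_sectCurvValues hφsymm hφ hji hki
  intro c hmc hcM
  obtain ⟨i₀, j₀, hij₀, rfl⟩ := hm.1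
  obtain ⟨i₁, j₁, hij₁, rfl⟩ := hM.1
  have hc : c ∈ uIcc (lam i₀ * lam j₀) (lam i₁ * lam j₁) := Icc_subset_uIcc ⟨hmc, hcM⟩
  by_cases h : i₀ = j₁
  · subst h
    rw [mul_comm (lam i₁)] at hc
    exact hsub hij₀.symm hij₁ hc
  rcases uIcc_subset_uIcc_union_uIcc (b := lam i₀ * lam j₁) hc with hc | hc
  · exact hsub hij₀.symm (Ne.symm h) hc
  · rw [mul_comm (lam i₀), mul_comm (lam i₁)] at hc
    exact hsub h hij₁ hc

/-- Every value in `[m, M]` (the interval of pairwise products of eigenvalues of `φ`)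
is attained as a sectional curvature of `R_φ`. -/
theorem sectional_curvature_attains_of_canonCT
    {V : Type*} [NormedAddCommGroup V] [InnerProductSpace ℝ V] [FiniteDimensional ℝ V]
    {n : ℕ} (hn : 2 ≤ n) (hdim : Module.finrank ℝ V = n)
    (φ : V →ₗ[ℝ] V →ₗ[ℝ] ℝ) (hφsymm : ∀ x y : V, φ x y = φ y x)
    (A : V →ₗ[ℝ] V) (hA : ∀ x y : V, φ x y = (inner ℝ (A x) y : ℝ))
    (b : OrthonormalBasis (Fin n) ℝ V) (lam : Fin n → ℝ)
    (hb : ∀ i, A (b i) = lam i • b i)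
    (m M : ℝ)
    (hm : IsLeast {c : ℝ | ∃ i j : Fin n, i ≠ j ∧ c = lam i * lam j} m)
    (hM : IsGreatest {c : ℝ | ∃ i j : Fin n, i ≠ j ∧ c = lam i * lam j} M) :
    ∀ c : ℝ, m ≤ c → c ≤ M →
      ∃ x y : V, LinearIndependent ℝ ![x, y] ∧
        sectCurv (canonCT (fun u v => φ u v)) x y = c :=
  sectional_curvature_attains_of_canonCT_general φ hφsymm A hA b lam hb m M hm hM
end

section
/- Let V be a real inner product space of finite dimension n ≥ 2, let k be a positive integer, and for each i = 1, …, k let εᵢ ∈ {1, −1} and let φᵢ be a symmetric bilinear form on V with eigenvalues λ₁⁽ⁱ⁾, …, λₙ⁽ⁱ⁾ repeated according to multiplicity. Set mᵢ = min{εᵢ λⱼ⁽ⁱ⁾ λₗ⁽ⁱ⁾ : j ≠ l} and Mᵢ = max{εᵢ λⱼ⁽ⁱ⁾ λₗ⁽ⁱ⁾ : j ≠ l}, and let R = Σᵢ εᵢ R_{φᵢ}. Then for every pair of linearly independent vectors x, y ∈ V, one has Σᵢ mᵢ ≤ κ_R(x,y) ≤ Σᵢ Mᵢ. -/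
open Finset RealInnerProductSpace

section WeightedGram

variable {ι : Type*} [Fintype ι]

def weightedGram (w a c : ι → ℝ) : ℝ :=
  (∑ j, w j * a j ^ 2) * (∑ j, w j * c j ^ 2) - (∑ j, w j * (a j * c j)) ^ 2

theorem two_mul_weightedGram (w a c : ι → ℝ) :
    2 * weightedGram w a c = ∑ j, ∑ l, w j * w l * (a j * c l - a l * c j) ^ 2 := by
  have expand : ∀ j l, w j * w l * (a j * c l - a l * c j) ^ 2
      = (w j * a j ^ 2) * (w l * c l ^ 2) + (w j * c j ^ 2) * (w l * a l ^ 2)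
        - 2 * ((w j * (a j * c j)) * (w l * (a l * c l))) := fun j l => by ring
  simp_rw [weightedGram, expand, sum_sub_distrib, sum_add_distrib, ← mul_sum, ← sum_mul]
  ring

theorem mul_weightedGram_le {s M : ℝ} {lam : ι → ℝ}
    (hM : ∀ j l, j ≠ l → s * (lam j * lam l) ≤ M) (a c : ι → ℝ) :
    s * weightedGram lam a c ≤ M * weightedGram 1 a c := by
  suffices h : s * (2 * weightedGram lam a c) ≤ M * (2 * weightedGram 1 a c) by linarith
  simp_rw [two_mul_weightedGram, mul_sum, Pi.one_apply, one_mul]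
  refine sum_le_sum fun j _ => sum_le_sum fun l _ => ?_
  obtain rfl | hjl := eq_or_ne j l
  · simp
  · rw [← mul_assoc]
    exact mul_le_mul_of_nonneg_right (hM j l hjl) (sq_nonneg _)

theorem le_mul_weightedGram {s m : ℝ} {lam : ι → ℝ}
    (hm : ∀ j l, j ≠ l → m ≤ s * (lam j * lam l)) (a c : ι → ℝ) :
    m * weightedGram 1 a c ≤ s * weightedGram lam a c := by
  have := mul_weightedGram_le (s := -s) (M := -m) (lam := lam)
    (fun j l hjl => by linarith [hm j l hjl]) a c
  linarith

end WeightedGram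

section OrthonormalCoordinates

variable {ι V : Type*} [Fintype ι] [NormedAddCommGroup V] [InnerProductSpace ℝ V]

theorem OrthonormalBasis.inner_map_eq_sum_of_apply_eq_smul (b : OrthonormalBasis ι ℝ V)
    {A : V →ₗ[ℝ] V} {lam : ι → ℝ} (hb : ∀ j, A (b j) = lam j • b j) (u v : V) :
    ⟪A u, v⟫ = ∑ j, lam j * (⟪b j, u⟫ * ⟪b j, v⟫) := by
  conv_lhs => rw [← b.sum_repr' u]
  simp only [map_sum, map_smul, hb, sum_inner, smul_smul, real_inner_smul_left]
  exact sum_congr rfl fun j _ => by ring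

theorem OrthonormalBasis.gram_eq_weightedGram_one (b : OrthonormalBasis ι ℝ V) (x y : V) :
    ⟪x, x⟫ * ⟪y, y⟫ - ⟪x, y⟫ ^ 2 = weightedGram 1 (fun j => ⟪b j, x⟫) (fun j => ⟪b j, y⟫) := by
  rw [← b.sum_inner_mul_inner x x, ← b.sum_inner_mul_inner y y, ← b.sum_inner_mul_inner x y]
  simp only [weightedGram, Pi.one_apply, one_mul, sq, real_inner_comm x, real_inner_comm y]

theorem canonCT_eq_weightedGram {φ : V → V → ℝ} (b : OrthonormalBasis ι ℝ V)
    {lam : ι → ℝ} (hφ : ∀ u v, φ u v = ∑ j, lam j * (⟪b j, u⟫ * ⟪b j, v⟫)) (x y : V) :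
    canonCT φ x y y x = weightedGram lam (fun j => ⟪b j, x⟫) (fun j => ⟪b j, y⟫) := by
  have hyx : φ y x = φ x y := by simp only [hφ, mul_comm ⟪_, y⟫]
  rw [canonCT, hyx, hφ x x, hφ y y, hφ x y, weightedGram]
  simp only [sq]

theorem gram_pos_of_linearIndependent {x y : V} (h : LinearIndependent ℝ ![x, y]) :
    0 < ⟪x, x⟫ * ⟪y, y⟫ - ⟪x, y⟫ ^ 2 := by
  have := (Matrix.posDef_gram_of_linearIndependent h).det_pos
  simpa [Matrix.det_fin_two, sq, real_inner_comm x y] using this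

end OrthonormalCoordinates

theorem sectional_curvature_bounds_of_sum_canonCT_general
    {V : Type*} [NormedAddCommGroup V] [InnerProductSpace ℝ V]
    {n : ℕ}
    (k : ℕ)
    (ε : Fin k → ℝ)
    (φ : Fin k → (V →ₗ[ℝ] V →ₗ[ℝ] ℝ))
    (A : Fin k → (V →ₗ[ℝ] V)) (hA : ∀ i, ∀ x y : V, φ i x y = (inner ℝ (A i x) y : ℝ))
    (b : Fin k → OrthonormalBasis (Fin n) ℝ V) (lam : Fin k → Fin n → ℝ)
    (hb : ∀ i j, A i (b i j) = lam i j • b i j)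
    (m M : Fin k → ℝ)
    (hm : ∀ i, IsLeast {c : ℝ | ∃ j l : Fin n, j ≠ l ∧ c = ε i * (lam i j * lam i l)} (m i))
    (hM : ∀ i, IsGreatest {c : ℝ | ∃ j l : Fin n, j ≠ l ∧ c = ε i * (lam i j * lam i l)} (M i)) :
    ∀ x y : V, LinearIndependent ℝ ![x, y] →
      (∑ i, m i) ≤
        sectCurv (fun a b' c d => ∑ i, ε i * canonCT (fun u v => φ i u v) a b' c d) x y ∧
      sectCurv (fun a b' c d => ∑ i, ε i * canonCT (fun u v => φ i u v) a b' c d) x y ≤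
        (∑ i, M i) := by
  intro x y hxy
  have hG := gram_pos_of_linearIndependent hxy
  have hφ (i) (u v : V) : φ i u v = ∑ j, lam i j * (⟪b i j, u⟫ * ⟪b i j, v⟫) :=
    (hA i u v).trans ((b i).inner_map_eq_sum_of_apply_eq_smul (hb i) u v)
  have hκ (i) := canonCT_eq_weightedGram (b i) (hφ i) x y
  have hgram (i) := (b i).gram_eq_weightedGram_one x y
  rw [sectCurv, le_div_iff₀ hG, div_le_iff₀ hG, sum_mul, sum_mul]
  refine ⟨sum_le_sum fun i _ => ?_, sum_le_sum fun i _ => ?_⟩ <;> rw [hκ i, hgram i]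
  · exact le_mul_weightedGram (fun j l hjl => (hm i).2 ⟨j, l, hjl, rfl⟩) _ _
  · exact mul_weightedGram_le (fun j l hjl => (hM i).2 ⟨j, l, hjl, rfl⟩) _ _

/-- Sectional curvature bounds for a linear combination `R = Σᵢ εᵢ R_{φᵢ}` of canonical
algebraic curvature tensors, in terms of the extreme signed pairwise products of the
eigenvalues of each `φᵢ`. -/
theorem sectional_curvature_bounds_of_sum_canonCT
    {V : Type*} [NormedAddCommGroup V] [InnerProductSpace ℝ V] [FiniteDimensional ℝ V]
    {n : ℕ} (hn : 2 ≤ n) (hdim : Module.finrank ℝ V = n)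
    (k : ℕ) (hk : 0 < k)
    (ε : Fin k → ℝ) (hε : ∀ i, ε i = 1 ∨ ε i = -1)
    (φ : Fin k → (V →ₗ[ℝ] V →ₗ[ℝ] ℝ)) (hφsymm : ∀ i, ∀ x y : V, φ i x y = φ i y x)
    (A : Fin k → (V →ₗ[ℝ] V)) (hA : ∀ i, ∀ x y : V, φ i x y = (inner ℝ (A i x) y : ℝ))
    (b : Fin k → OrthonormalBasis (Fin n) ℝ V) (lam : Fin k → Fin n → ℝ)
    (hb : ∀ i j, A i (b i j) = lam i j • b i j)
    (m M : Fin k → ℝ)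
    (hm : ∀ i, IsLeast {c : ℝ | ∃ j l : Fin n, j ≠ l ∧ c = ε i * (lam i j * lam i l)} (m i))
    (hM : ∀ i, IsGreatest {c : ℝ | ∃ j l : Fin n, j ≠ l ∧ c = ε i * (lam i j * lam i l)} (M i)) :
    ∀ x y : V, LinearIndependent ℝ ![x, y] →
      (∑ i, m i) ≤
        sectCurv (fun a b' c d => ∑ i, ε i * canonCT (fun u v => φ i u v) a b' c d) x y ∧
      sectCurv (fun a b' c d => ∑ i, ε i * canonCT (fun u v => φ i u v) a b' c d) x y ≤
        (∑ i, M i) :=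
  sectional_curvature_bounds_of_sum_canonCT_general k ε φ A hA b lam hb m M hm hM
end
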